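/- arXiv:2505.08472 — 4 statements merged into one kernel-verified Lean document; each statement's English description precedes it below -/
import Mathlib

section
/- Let C, c > 0 with C ≥ 4c, let γ ∈ ℕ₀^n be a multi-index and L ∈ ℕ with L ≥ 1 and |γ| ≤ L. Then ∑_{β ≤ γ} (γ!/β!) · c^{|γ−β|} · (CL)^{|β|} ≤ 2^n · C^{|γ|} · L^{|γ|}. -/
open Finset Nat

/-- Let `C, c > 0` with `C ≥ 4c`, `γ ∈ ℕ₀ⁿ` a multi-index and `L ≥ 1` with `|γ| ≤ L`.
Then `∑_{β ≤ γ} (γ!/β!) c^{|γ−β|} (CL)^{|β|} ≤ 2ⁿ C^{|γ|} L^{|γ|}`. -/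
theorem sum_multiIndex_factorial_bound (n : ℕ) (C c : ℝ) (hc : 0 < c) (hCc : 4 * c ≤ C)
    (γ : Fin n → ℕ) (L : ℕ) (hL : 1 ≤ L) (hγ : (∑ i, γ i) ≤ L) :
    ∑ β ∈ Finset.Iic γ,
        ((∏ i, (γ i)! : ℕ) : ℝ) / ((∏ i, (β i)! : ℕ) : ℝ) *
          c ^ (∑ i, (γ i - β i)) * (C * (L : ℝ)) ^ (∑ i, β i)
      ≤ 2 ^ n * C ^ (∑ i, γ i) * (L : ℝ) ^ (∑ i, γ i) := by
  have hC : 0 < C := lt_of_lt_of_le (by linarith) hCc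
  have hLpos : (0:ℝ) < L := by exact_mod_cast hL
  -- termwise bound
  have key : ∀ β ∈ Finset.Iic γ,
      ((∏ i, (γ i)! : ℕ) : ℝ) / ((∏ i, (β i)! : ℕ) : ℝ) *
          c ^ (∑ i, (γ i - β i)) * (C * (L : ℝ)) ^ (∑ i, β i)
        ≤ (1/4) ^ (∑ i, (γ i - β i)) * (C ^ (∑ i, γ i) * (L:ℝ) ^ (∑ i, γ i)) := by
    intro β hβ
    rw [Finset.mem_Iic] at hβ
    have hβγ : ∀ i, β i ≤ γ i := fun i => hβ i
    have hsplit : (∑ i, (γ i - β i)) + (∑ i, β i) = ∑ i, γ i := by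
      rw [← Finset.sum_add_distrib]
      exact Finset.sum_congr rfl fun i _ => Nat.sub_add_cancel (hβγ i)
    -- factorial ratio bound
    have hfac : ((∏ i, (γ i)! : ℕ) : ℝ) / ((∏ i, (β i)! : ℕ) : ℝ)
        ≤ (L:ℝ) ^ (∑ i, (γ i - β i)) := by
      have hdesc : (∏ i, (γ i)!) = (∏ i, (β i)!) * ∏ i, (γ i).descFactorial (γ i - β i) := by
        rw [← Finset.prod_mul_distrib]
        refine Finset.prod_congr rfl fun i _ => ?_
        rw [Nat.descFactorial_eq_div (Nat.sub_le _ _)]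
        have : γ i - (γ i - β i) = β i := Nat.sub_sub_self (hβγ i)
        rw [this, Nat.mul_div_cancel' (Nat.factorial_dvd_factorial (hβγ i))]
      have hb : (0:ℝ) < ((∏ i, (β i)! : ℕ) : ℝ) := by
        exact_mod_cast Finset.prod_pos fun i _ => Nat.factorial_pos _
      rw [div_le_iff₀ hb, hdesc]
      push_cast
      rw [mul_comm]
      gcongr
      calc (∏ i, ((γ i).descFactorial (γ i - β i) : ℝ))
          ≤ ∏ i, (L:ℝ) ^ (γ i - β i) := by
            refine Finset.prod_le_prod (fun i _ => by positivity) fun i _ => ?_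
            calc ((γ i).descFactorial (γ i - β i) : ℝ) ≤ ((γ i) ^ (γ i - β i) : ℕ) := by
                  exact_mod_cast Nat.descFactorial_le_pow _ _
              _ ≤ (L:ℝ) ^ (γ i - β i) := by
                  have : γ i ≤ L := le_trans (Finset.single_le_sum
                    (fun i _ => Nat.zero_le _) (Finset.mem_univ i)) hγ
                  push_cast
                  gcongr

        _ = (L:ℝ) ^ (∑ i, (γ i - β i)) := by rw [Finset.prod_pow_eq_pow_sum]
    have hcL : c * (L:ℝ) ≤ (1/4) * (C * L) := by nlinarith
    calc ((∏ i, (γ i)! : ℕ) : ℝ) / ((∏ i, (β i)! : ℕ) : ℝ) *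
            c ^ (∑ i, (γ i - β i)) * (C * (L : ℝ)) ^ (∑ i, β i)
        ≤ (L:ℝ) ^ (∑ i, (γ i - β i)) * c ^ (∑ i, (γ i - β i)) * (C * (L : ℝ)) ^ (∑ i, β i) := by
          gcongr
      _ = (c * L) ^ (∑ i, (γ i - β i)) * (C * (L : ℝ)) ^ (∑ i, β i) := by
          rw [mul_pow]; ring
      _ ≤ ((1/4) * (C * L)) ^ (∑ i, (γ i - β i)) * (C * (L : ℝ)) ^ (∑ i, β i) := by
          gcongr
      _ = (1/4) ^ (∑ i, (γ i - β i)) * ((C * L) ^ ((∑ i, (γ i - β i)) + (∑ i, β i))) := by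
          rw [mul_pow, pow_add]; ring
      _ = (1/4) ^ (∑ i, (γ i - β i)) * (C ^ (∑ i, γ i) * (L:ℝ) ^ (∑ i, γ i)) := by
          rw [hsplit, mul_pow]
  calc ∑ β ∈ Finset.Iic γ,
        ((∏ i, (γ i)! : ℕ) : ℝ) / ((∏ i, (β i)! : ℕ) : ℝ) *
          c ^ (∑ i, (γ i - β i)) * (C * (L : ℝ)) ^ (∑ i, β i)
      ≤ ∑ β ∈ Finset.Iic γ,
          (1/4:ℝ) ^ (∑ i, (γ i - β i)) * (C ^ (∑ i, γ i) * (L:ℝ) ^ (∑ i, γ i)) :=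
        Finset.sum_le_sum key
    _ = (∑ β ∈ Finset.Iic γ, (1/4:ℝ) ^ (∑ i, (γ i - β i))) *
          (C ^ (∑ i, γ i) * (L:ℝ) ^ (∑ i, γ i)) := by rw [Finset.sum_mul]
    _ ≤ (2:ℝ) ^ n * (C ^ (∑ i, γ i) * (L:ℝ) ^ (∑ i, γ i)) := by
        gcongr
        have hIic : (Finset.Iic γ) = Fintype.piFinset fun i => Finset.Iic (γ i) := by
          ext β; simp [Finset.mem_Iic, Fintype.mem_piFinset, Pi.le_def]
        rw [hIic]
        have : ∀ β ∈ Fintype.piFinset fun i => Finset.Iic (γ i),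
            (1/4:ℝ) ^ (∑ i, (γ i - β i)) = ∏ i, (1/4:ℝ) ^ (γ i - β i) := by
          intro β _; rw [Finset.prod_pow_eq_pow_sum]
        rw [Finset.sum_congr rfl this,
          ← Finset.prod_univ_sum (fun i => Finset.Iic (γ i))
            (fun i j => (1/4:ℝ) ^ (γ i - j))]
        calc ∏ i, ∑ j ∈ Finset.Iic (γ i), (1/4:ℝ) ^ (γ i - j)
            ≤ ∏ _i : Fin n, (2:ℝ) := by
              refine Finset.prod_le_prod (fun i _ => Finset.sum_nonneg fun j _ => by positivity)
                fun i _ => ?_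
              have h1 : ∑ j ∈ Finset.Iic (γ i), (1/4:ℝ) ^ (γ i - j)
                  = ∑ k ∈ Finset.range (γ i + 1), (1/4:ℝ) ^ k := by
                have hr : Finset.Iic (γ i) = Finset.range (γ i + 1) := by
                  ext k; simp [Nat.lt_succ_iff]
                rw [hr]
                have := Finset.sum_range_reflect (fun k => (1/4:ℝ)^k) (γ i + 1)
                simp only [Nat.add_sub_cancel] at this
                exact this
              rw [h1]
              calc ∑ k ∈ Finset.range (γ i + 1), (1/4:ℝ) ^ k
                  ≤ ∑ k ∈ Finset.range (γ i + 1), (1/(2:ℝ)) ^ k := by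
                    refine Finset.sum_le_sum fun k _ => ?_
                    apply pow_le_pow_left₀ (by norm_num) (by norm_num)
                _ ≤ 2 := sum_geometric_two_le _
          _ = (2:ℝ) ^ n := by simp
    _ = 2 ^ n * C ^ (∑ i, γ i) * (L : ℝ) ^ (∑ i, γ i) := by ring
end

section
/- Key sum estimate in the finite realization construction: if ρ ≥ 2R_a and C_a/ρ < 1/e, then for all η, ∑_{|η|/(2ρ) < j < |η|/ρ} √(2πj) · (C_a j/(e|η|))^j ≤ √(2π) (|η|/ρ)^{3/2} e^{−|η|/(2ρ)}, and this is bounded by C e^{−C^{−1}|η|} for some C > 0. -/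
open Finset Real

lemma aux_rpow_exp_bound (t : ℝ) (ht : 0 ≤ t) :
    t ^ ((3:ℝ)/2) ≤ 64 * Real.exp (t/4) := by
  have hexp1 : (1:ℝ) ≤ Real.exp (t/4) := Real.one_le_exp (by positivity)
  rcases le_total t 1 with h1 | h1
  · have h2 : t ^ ((3:ℝ)/2) ≤ 1 := Real.rpow_le_one ht h1 (by norm_num)
    nlinarith
  · have ht8 : t ≤ 8 * Real.exp (t/8) := by
      have := Real.add_one_le_exp (t/8)
      nlinarith [Real.exp_pos (t/8)]
    have h2 : t ^ ((3:ℝ)/2) ≤ t ^ (2:ℝ) :=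
      Real.rpow_le_rpow_of_exponent_le h1 (by norm_num)
    have h3 : t ^ (2:ℝ) = t ^ (2:ℕ) := by
      rw [← Real.rpow_natCast]; norm_num
    have h5 : (Real.exp (t/8)) ^ (2:ℕ) = Real.exp (t/4) := by
      rw [sq, ← Real.exp_add]; ring_nf
    have h4 : t ^ (2:ℕ) ≤ 64 * Real.exp (t/4) := by
      rw [← h5]
      have h6 : t ^ (2:ℕ) ≤ (8 * Real.exp (t/8)) ^ (2:ℕ) :=
        pow_le_pow_left₀ (by linarith) ht8 2
      nlinarith [Real.exp_pos (t/8)]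
    calc t ^ ((3:ℝ)/2) ≤ t ^ (2:ℝ) := h2
      _ = t ^ (2:ℕ) := h3
      _ ≤ 64 * Real.exp (t/4) := h4

/-- Key sum estimate in the finite realization construction: if `ρ ≥ 2Rₐ` and
`Cₐ/ρ < 1/e`, then for all `r = |η| > 0`,
`∑_{r/(2ρ) < j < r/ρ} √(2πj) (Cₐ j/(e r))^j ≤ √(2π) (r/ρ)^{3/2} e^{−r/(2ρ)}`,
and this is bounded by `C e^{−C⁻¹ r}` for some `C > 0`. -/
theorem finite_realization_sum_estimate (Ca ρ Ra : ℝ) (hRa : 0 < Ra) (hCa : 0 < Ca)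
    (hρ : 2 * Ra ≤ ρ) (h : Ca / ρ < (Real.exp 1)⁻¹)
    (S : ℝ → ℝ)
    (hS : ∀ r : ℝ, S r =
      ∑ j ∈ (Finset.range (Nat.ceil (r / ρ))).filter
          (fun j : ℕ => r / (2 * ρ) < (j : ℝ) ∧ (j : ℝ) < r / ρ),
        Real.sqrt (2 * Real.pi * (j : ℝ)) * (Ca * (j : ℝ) / (Real.exp 1 * r)) ^ j) :
    (∀ r : ℝ, 0 < r →
        S r ≤ Real.sqrt (2 * Real.pi) * (r / ρ) ^ ((3 : ℝ) / 2) *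
          Real.exp (-r / (2 * ρ))) ∧
    ∃ C : ℝ, 0 < C ∧ ∀ r : ℝ, 0 < r → S r ≤ C * Real.exp (-C⁻¹ * r) := by
  have hρ0 : 0 < ρ := by linarith
  have he : (0:ℝ) < Real.exp 1 := Real.exp_pos 1
  have he1 : (1:ℝ) ≤ Real.exp 1 := Real.one_le_exp (by norm_num)
  have hCaρ : Ca < ρ := by
    have hinv : (Real.exp 1)⁻¹ ≤ 1 := inv_le_one_of_one_le₀ he1
    have : Ca / ρ < 1 := lt_of_lt_of_le h hinv
    exact (div_lt_one hρ0).mp this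
  have main : ∀ r : ℝ, 0 < r →
      S r ≤ Real.sqrt (2 * Real.pi) * (r / ρ) ^ ((3 : ℝ) / 2) *
        Real.exp (-r / (2 * ρ)) := by
    intro r hr
    rw [hS r]
    set t := r / ρ with htdef
    have ht : 0 < t := div_pos hr hρ0
    set s := (Finset.range (Nat.ceil t)).filter
        (fun j : ℕ => r / (2 * ρ) < (j : ℝ) ∧ (j : ℝ) < t) with hsdef
    set B := Real.sqrt (2 * Real.pi) * Real.sqrt t * Real.exp (-r / (2 * ρ)) with hBdef
    have hB0 : 0 ≤ B := by positivity
    have hterm : ∀ j ∈ s,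
        Real.sqrt (2 * Real.pi * (j : ℝ)) * (Ca * (j : ℝ) / (Real.exp 1 * r)) ^ j ≤ B := by
      intro j hj
      simp only [hsdef, Finset.mem_filter, Finset.mem_range] at hj
      obtain ⟨hjn, hj1, hj2⟩ := hj
      have hjt : (j : ℝ) < t := hj2
      have hsq : Real.sqrt (2 * Real.pi * (j : ℝ)) ≤ Real.sqrt (2 * Real.pi) * Real.sqrt t := by
        rw [Real.sqrt_mul (by positivity)]
        exact mul_le_mul_of_nonneg_left (Real.sqrt_le_sqrt hjt.le) (Real.sqrt_nonneg _)
      have hbase0 : 0 ≤ Ca * (j : ℝ) / (Real.exp 1 * r) := by positivity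
      have hbase : Ca * (j : ℝ) / (Real.exp 1 * r) ≤ (Real.exp 1)⁻¹ := by
        rw [div_le_iff₀ (by positivity)]
        have h1 : Ca * (j : ℝ) ≤ ρ * (j : ℝ) :=
          mul_le_mul_of_nonneg_right hCaρ.le (Nat.cast_nonneg j)
        have h2 : ρ * (j : ℝ) ≤ r := by
          have : (j : ℝ) * ρ < r := (lt_div_iff₀ hρ0).mp hjt
          linarith
        have h3 : (Real.exp 1)⁻¹ * (Real.exp 1 * r) = r := by
          rw [← mul_assoc, inv_mul_cancel₀ he.ne', one_mul]
        linarith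
      have hpow : (Ca * (j : ℝ) / (Real.exp 1 * r)) ^ j ≤ Real.exp (-r / (2 * ρ)) := by
        calc (Ca * (j : ℝ) / (Real.exp 1 * r)) ^ j ≤ ((Real.exp 1)⁻¹) ^ j :=
              pow_le_pow_left₀ hbase0 hbase j
          _ = Real.exp (-(j:ℝ)) := by
              rw [← Real.exp_neg, ← Real.exp_nat_mul]
              norm_num
          _ ≤ Real.exp (-r / (2 * ρ)) := by
              rw [Real.exp_le_exp, neg_div]
              linarith
      calc Real.sqrt (2 * Real.pi * (j : ℝ)) * (Ca * (j : ℝ) / (Real.exp 1 * r)) ^ j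
          ≤ (Real.sqrt (2 * Real.pi) * Real.sqrt t) * Real.exp (-r / (2 * ρ)) :=
            mul_le_mul hsq hpow (by positivity) (by positivity)
        _ = B := by rw [hBdef]
    have hsum := Finset.sum_le_card_nsmul s _ B hterm
    rw [nsmul_eq_mul] at hsum
    have hcard : (s.card : ℝ) ≤ t := by
      have hsub : s ⊆ Finset.Ico 1 (Nat.ceil t) := by
        intro j hj
        simp only [hsdef, Finset.mem_filter, Finset.mem_range] at hj
        obtain ⟨hjn, hj1, hj2⟩ := hj
        have hj0 : j ≠ 0 := by
          rintro rfl
          simp only [Nat.cast_zero] at hj1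
          have : 0 < r / (2 * ρ) := by positivity
          linarith
        exact Finset.mem_Ico.mpr ⟨Nat.one_le_iff_ne_zero.mpr hj0, hjn⟩
      have hle : s.card ≤ Nat.ceil t - 1 := by
        have := Finset.card_le_card hsub
        simpa using this
      rcases Nat.eq_zero_or_pos (Nat.ceil t) with h0 | h0
      · have : s.card = 0 := by omega
        rw [this]; exact_mod_cast ht.le
      · have hceil : (Nat.ceil t : ℝ) < t + 1 := Nat.ceil_lt_add_one ht.le
        have : ((Nat.ceil t - 1 : ℕ) : ℝ) = (Nat.ceil t : ℝ) - 1 := by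
          rw [Nat.cast_sub h0]; norm_num
        have hcast : (s.card : ℝ) ≤ ((Nat.ceil t - 1 : ℕ) : ℝ) := by exact_mod_cast hle
        rw [this] at hcast
        linarith
    have h32 : t ^ ((3:ℝ)/2) = t * Real.sqrt t := by
      rw [show (3:ℝ)/2 = 1 + 1/2 by norm_num, Real.rpow_add ht, Real.rpow_one,
        Real.sqrt_eq_rpow]
    calc (∑ j ∈ s, Real.sqrt (2 * Real.pi * (j : ℝ)) *
          (Ca * (j : ℝ) / (Real.exp 1 * r)) ^ j) ≤ (s.card : ℝ) * B := hsum
      _ ≤ t * B := mul_le_mul_of_nonneg_right hcard hB0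
      _ = Real.sqrt (2 * Real.pi) * t ^ ((3:ℝ)/2) * Real.exp (-r / (2 * ρ)) := by
          rw [h32, hBdef]; ring
  refine ⟨main, max (64 * Real.sqrt (2 * Real.pi)) (4 * ρ), ?_, ?_⟩
  · exact lt_max_of_lt_right (by linarith)
  · intro r hr
    set C := max (64 * Real.sqrt (2 * Real.pi)) (4 * ρ) with hCdef
    have hC4ρ : 4 * ρ ≤ C := le_max_right _ _
    have hC0 : 0 < C := lt_of_lt_of_le (by linarith) hC4ρ
    have ht : 0 < r / ρ := div_pos hr hρ0
    have h1 := main r hr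
    have h2 : (r / ρ) ^ ((3:ℝ)/2) ≤ 64 * Real.exp (r / (4 * ρ)) := by
      have := aux_rpow_exp_bound (r / ρ) ht.le
      have harg : r / ρ / 4 = r / (4 * ρ) := by ring
      rwa [harg] at this
    have h3 : Real.sqrt (2 * Real.pi) * (r / ρ) ^ ((3:ℝ)/2) * Real.exp (-r / (2 * ρ))
        ≤ 64 * Real.sqrt (2 * Real.pi) * Real.exp (-r / (4 * ρ)) := by
      have := mul_le_mul_of_nonneg_left h2 (Real.sqrt_nonneg (2 * Real.pi))
      have hexp : Real.exp (r / (4 * ρ)) * Real.exp (-r / (2 * ρ)) =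
          Real.exp (-r / (4 * ρ)) := by
        rw [← Real.exp_add]; ring_nf
      calc Real.sqrt (2 * Real.pi) * (r / ρ) ^ ((3:ℝ)/2) * Real.exp (-r / (2 * ρ))
          ≤ Real.sqrt (2 * Real.pi) * (64 * Real.exp (r / (4 * ρ))) *
            Real.exp (-r / (2 * ρ)) :=
            mul_le_mul_of_nonneg_right this (Real.exp_pos _).le
        _ = 64 * Real.sqrt (2 * Real.pi) *
            (Real.exp (r / (4 * ρ)) * Real.exp (-r / (2 * ρ))) := by ring
        _ = 64 * Real.sqrt (2 * Real.pi) * Real.exp (-r / (4 * ρ)) := by rw [hexp]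
    have h4 : 64 * Real.sqrt (2 * Real.pi) * Real.exp (-r / (4 * ρ)) ≤
        C * Real.exp (-C⁻¹ * r) := by
      have hexple : Real.exp (-r / (4 * ρ)) ≤ Real.exp (-C⁻¹ * r) := by
        rw [Real.exp_le_exp]
        have hinv : C⁻¹ ≤ (4 * ρ)⁻¹ := inv_anti₀ (by linarith) hC4ρ
        have : C⁻¹ * r ≤ (4 * ρ)⁻¹ * r := mul_le_mul_of_nonneg_right hinv hr.le
        have heq : -r / (4 * ρ) = -((4 * ρ)⁻¹ * r) := by ring
        rw [heq]
        linarith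
      exact mul_le_mul (le_max_left _ _) hexple (Real.exp_pos _).le hC0.le
    linarith
end

section
/- Let Φ(z,η;x,v) = φ(z,x,η) − z·v₂ + (i/2)|z−v₁|², where φ is a non-degenerate analytic phase and at the stationary point (ẑ,η̂;x̂,v̂) the real matrix A = [[∂_z φ_z, ∂_z φ_η],[∂_η φ_z, ∂_η φ_η]] is such that [[∂_x φ_z],[∂_x φ_η]]-type injectivity (as in the salutary conditions) holds. Then the complex Hessian ∇²_{(z,η)}Φ(ẑ,η̂;x̂,v̂) = A + iB, with B = diag(Id_N, 0), is non-degenerate: if (A+iB)(a+ib) = 0 with a,b ∈ ℝ^{N+n} then a = b = 0. -/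
open RealInnerProductSpace

/-- The projection onto the `z`-block: `B = diag(Id_N, 0)`. -/
noncomputable def zBlockProj (N n : ℕ) :
    EuclideanSpace ℝ (Fin N ⊕ Fin n) → EuclideanSpace ℝ (Fin N ⊕ Fin n) :=
  fun u => WithLp.toLp 2 fun i => match i with
  | Sum.inl j => u (Sum.inl j)
  | Sum.inr _ => 0

/-- Embedding of an `η`-vector into the full `(z,η)`-space. -/
noncomputable def etaEmbed (N n : ℕ) (η : EuclideanSpace ℝ (Fin n)) :
    EuclideanSpace ℝ (Fin N ⊕ Fin n) :=
  WithLp.toLp 2 fun i => match i with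
  | Sum.inl _ => 0
  | Sum.inr j => η j

/-- The complex Hessian `∇²Φ = A + iB`, with `A` the real symmetric Hessian of `φ` in
`(z,η)` and `B = diag(Id_N, 0)`, is non-degenerate: if `(A+iB)(a+ib) = 0` (equivalently,
`Aa − Bb = 0` and `Ab + Ba = 0`) with `a, b` real, then `a = b = 0`. The key hypothesis
is the injectivity of `η̇ ↦ (∂_ηφ_z η̇, ∂_ηφ_η η̇)`, i.e. of `A` restricted to the
`η`-block. -/
theorem hessian_A_add_iB_nondegenerate (N n : ℕ)
    (A : EuclideanSpace ℝ (Fin N ⊕ Fin n) →ₗ[ℝ] EuclideanSpace ℝ (Fin N ⊕ Fin n))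
    (hsymm : ∀ u v, ⟪A u, v⟫ = ⟪u, A v⟫)
    (hinj : ∀ η : EuclideanSpace ℝ (Fin n), A (etaEmbed N n η) = 0 → η = 0) :
    ∀ a b : EuclideanSpace ℝ (Fin N ⊕ Fin n),
      A a - zBlockProj N n b = 0 → A b + zBlockProj N n a = 0 → a = 0 ∧ b = 0 := by
  intro a b h1 h2
  have hAa : A a = zBlockProj N n b := by
    have := sub_eq_zero.mp h1; exact this
  have hAb : A b = -zBlockProj N n a := by
    have := eq_neg_of_add_eq_zero_left h2; exact this
  -- inner product formula for zBlockProj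
  have hB : ∀ u v : EuclideanSpace ℝ (Fin N ⊕ Fin n),
      ⟪(zBlockProj N n u : EuclideanSpace ℝ (Fin N ⊕ Fin n)), v⟫
        = ∑ j : Fin N, u (Sum.inl j) * v (Sum.inl j) := by
    intro u v
    rw [PiLp.inner_apply]
    rw [Fintype.sum_sum_type]
    simp [zBlockProj, mul_comm]
  -- ⟪Bb,b⟫ = ⟪Aa,b⟫ = ⟪a,Ab⟫ = -⟪a,Ba⟫ = -⟪Ba,a⟫
  have key : (∑ j : Fin N, b (Sum.inl j) * b (Sum.inl j))
      = -(∑ j : Fin N, a (Sum.inl j) * a (Sum.inl j)) := by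
    have e1 : ⟪A a, b⟫ = ∑ j : Fin N, b (Sum.inl j) * b (Sum.inl j) := by
      rw [hAa, hB]
    have e2 : ⟪A a, b⟫ = -(∑ j : Fin N, a (Sum.inl j) * a (Sum.inl j)) := by
      rw [hsymm, real_inner_comm, hAb]
      rw [show ⟪(-zBlockProj N n a : EuclideanSpace ℝ (Fin N ⊕ Fin n)), a⟫
          = -⟪(zBlockProj N n a : EuclideanSpace ℝ (Fin N ⊕ Fin n)), a⟫ from
        inner_neg_left _ _, hB]
    rw [← e1, e2]
  have ha0 : ∀ j : Fin N, a (Sum.inl j) = 0 := by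
    have hsum : (∑ j : Fin N, b (Sum.inl j) * b (Sum.inl j))
        + (∑ j : Fin N, a (Sum.inl j) * a (Sum.inl j)) = 0 := by
      rw [key]; ring
    have hzero : (∑ j : Fin N, a (Sum.inl j) * a (Sum.inl j)) = 0 := by
      have hb' : (0:ℝ) ≤ ∑ j : Fin N, b (Sum.inl j) * b (Sum.inl j) :=
        Finset.sum_nonneg fun j _ => mul_self_nonneg _
      have ha' : (0:ℝ) ≤ ∑ j : Fin N, a (Sum.inl j) * a (Sum.inl j) :=
        Finset.sum_nonneg fun j _ => mul_self_nonneg _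
      linarith
    intro j
    have := (Finset.sum_eq_zero_iff_of_nonneg
      (fun j _ => mul_self_nonneg (a (Sum.inl j)))).mp hzero j (Finset.mem_univ j)
    exact mul_self_eq_zero.mp this
  have hb0 : ∀ j : Fin N, b (Sum.inl j) = 0 := by
    have hsum : (∑ j : Fin N, b (Sum.inl j) * b (Sum.inl j))
        + (∑ j : Fin N, a (Sum.inl j) * a (Sum.inl j)) = 0 := by
      rw [key]; ring
    have hzero : (∑ j : Fin N, b (Sum.inl j) * b (Sum.inl j)) = 0 := by
      have ha' : (0:ℝ) ≤ ∑ j : Fin N, a (Sum.inl j) * a (Sum.inl j) :=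
        Finset.sum_nonneg fun j _ => mul_self_nonneg _
      have hb' : (0:ℝ) ≤ ∑ j : Fin N, b (Sum.inl j) * b (Sum.inl j) :=
        Finset.sum_nonneg fun j _ => mul_self_nonneg _
      linarith
    intro j
    have := (Finset.sum_eq_zero_iff_of_nonneg
      (fun j _ => mul_self_nonneg (b (Sum.inl j)))).mp hzero j (Finset.mem_univ j)
    exact mul_self_eq_zero.mp this
  -- rewrite a and b as eta embeddings
  have hae : a = etaEmbed N n (WithLp.toLp 2 (fun j => a (Sum.inr j))) := by
    ext i; cases i with
    | inl j => simpa [etaEmbed] using ha0 j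
    | inr j => rfl
  have hbe : b = etaEmbed N n (WithLp.toLp 2 (fun j => b (Sum.inr j))) := by
    ext i; cases i with
    | inl j => simpa [etaEmbed] using hb0 j
    | inr j => rfl
  have hBb0 : zBlockProj N n b = 0 := by
    ext i; cases i with
    | inl j => exact hb0 j
    | inr j => rfl
  have hBa0 : zBlockProj N n a = 0 := by
    ext i; cases i with
    | inl j => exact ha0 j
    | inr j => rfl
  have hAa0 : A a = 0 := by rw [hAa, hBb0]
  have hAb0 : A b = 0 := by rw [hAb, hBa0]; simp
  have ha : (WithLp.toLp 2 (fun j => a (Sum.inr j)) : EuclideanSpace ℝ (Fin n)) = 0 :=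
    hinj _ (by rw [← hae]; exact hAa0)
  have hb : (WithLp.toLp 2 (fun j => b (Sum.inr j)) : EuclideanSpace ℝ (Fin n)) = 0 :=
    hinj _ (by rw [← hbe]; exact hAb0)
  constructor
  · ext i; cases i with
    | inl j => exact ha0 j
    | inr j => exact congrArg (fun v : EuclideanSpace ℝ (Fin n) => v j) ha
  · ext i; cases i with
    | inl j => exact hb0 j
    | inr j => exact congrArg (fun v : EuclideanSpace ℝ (Fin n) => v j) hb
end

section
/- Let Λ be a canonical relation containing (ẑ,ζ̂,x̂,ξ̂) that satisfies the Bolker condition there (dπ_L injective and π_L^{-1}(ẑ,ζ̂) = {(ẑ,ζ̂,x̂,ξ̂)}). Suppose the forward mapping property WF_a(Tf) ⊂ Λ ∘ WF_a(f) holds for T, the microlocal injectivity (ẑ,ζ̂) ∉ WF_a(Tγf) ⟹ (x̂,ξ̂) ∉ WF_a(γf) holds for compactly supported f localized near x̂, and the vertical condition: (ẑ,ζ̂,x,ξ) ∈ Λ ⟹ ξ ≠ 0. Then for any f ∈ E'(X̂): (ẑ,ζ̂) ∉ WF_a(Tf) ⟺ (x̂,ξ̂) ∉ WF_a(f). -/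
/-- Abstract form of the global recovery of the analytic wavefront set under the
Bolker condition. Here `DX`, `DZ` are the (additive groups of) distributions on the
input and output sides, `WFX`, `WFZ` their analytic wavefront sets (valued in abstract
phase spaces `PX`, `PZ`), `T : DX →+ DZ` the FIO, and `Λ` its canonical relation.
Hypotheses:
* `hBolker`: the Bolker condition at `(zζ₀, xξ₀)`: `π_L⁻¹(zζ₀) = {(zζ₀, xξ₀)}`;
* `hforward`: the forward mapping property `WF_a(Tf) ⊆ Λ ∘ WF_a(f)` (the vertical
  condition `ξ ≠ 0` on `Λ` guarantees there is no extra `WF_a(T)_Z` contribution);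
* `hsubX`, `hsubZ`, `hnegZ`: subadditivity and reflection invariance of `WF_a`;
* `hloc`: every `f` splits as `f = g + h` with `g` localized near `x̂` (so that
  `xξ₀ ∉ WF_a(h)`, microlocal injectivity `zζ₀ ∉ WF_a(Tg) → xξ₀ ∉ WF_a(g)` holds for
  the localized piece `g`, and `xξ₀ ∉ WF_a(g) → xξ₀ ∉ WF_a(f)` since the cutoff is `1`
  near `x̂`).
Conclusion: for every `f`, `zζ₀ ∉ WF_a(Tf) ↔ xξ₀ ∉ WF_a(f)`. -/
theorem bolker_wavefront_iff
    {PX PZ : Type*} {DX DZ : Type*} [AddCommGroup DX] [AddCommGroup DZ]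
    (WFX : DX → Set PX) (WFZ : DZ → Set PZ)
    (T : DX →+ DZ) (Λ : Set (PZ × PX)) (zζ₀ : PZ) (xξ₀ : PX)
    (hΛ : (zζ₀, xξ₀) ∈ Λ)
    (hBolker : ∀ p : PX, (zζ₀, p) ∈ Λ → p = xξ₀)
    (hforward : ∀ f : DX, WFZ (T f) ⊆ {q : PZ | ∃ p ∈ WFX f, (q, p) ∈ Λ})
    (hsubX : ∀ u v : DX, WFX (u + v) ⊆ WFX u ∪ WFX v)
    (hsubZ : ∀ u v : DZ, WFZ (u + v) ⊆ WFZ u ∪ WFZ v)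
    (hnegZ : ∀ u : DZ, WFZ (-u) = WFZ u)
    (hloc : ∀ f : DX, ∃ g h : DX, f = g + h ∧ xξ₀ ∉ WFX h ∧
      (zζ₀ ∉ WFZ (T g) → xξ₀ ∉ WFX g) ∧ (xξ₀ ∉ WFX g → xξ₀ ∉ WFX f)) :
    ∀ f : DX, zζ₀ ∉ WFZ (T f) ↔ xξ₀ ∉ WFX f := by
  -- key: if xξ₀ ∉ WFX u then zζ₀ ∉ WFZ (T u)
  have key : ∀ u : DX, xξ₀ ∉ WFX u → zζ₀ ∉ WFZ (T u) := by
    intro u hu hz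
    obtain ⟨p, hp, hpΛ⟩ := hforward u hz
    exact hu (hBolker p hpΛ ▸ hp)
  intro f
  constructor
  · intro hz
    obtain ⟨g, h, hf, hh, hinj, hcut⟩ := hloc f
    apply hcut
    apply hinj
    have hTg : T g = T f + -(T h) := by
      rw [hf, map_add]; abel
    intro hzg
    rw [hTg] at hzg
    rcases hsubZ (T f) (-(T h)) hzg with h1 | h2
    · exact hz h1
    · rw [hnegZ] at h2
      exact key h hh h2
  · exact key f
end
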